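/- Every finite subgroup G of PGL(2,ℂ) is conjugate within PGL(2,ℂ) to a subgroup of the image of the unitary group U(2) under the canonical projection GL(2,ℂ) → PGL(2,ℂ). (Every finite group of Möbius transformations is conjugate into the maximal compact subgroup PU(2) of the Möbius group.) -/

import Mathlib

/-!
Weyl's unitary trick. A finite subgroup `G` of `PGL(n, ℂ)` lifts to the finite subgroup
`Γ = toPGL⁻¹ G` of `SL(n, ℂ)`: the map `SL(n, ℂ) → PGL(n, ℂ)` is onto because `ℂ` has `n`-th roots,
and its kernel, the scalar matrices of determinant one, is finite. For a finite group `Γ` acting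
through `ρ : Γ → GL(n, ℂ)`, the average `P = ∑ γ, (ρ γ)ᴴ (ρ γ)` is positive definite and satisfies
`(ρ γ)ᴴ P (ρ γ) = P`; writing `P = Bᴴ B`, every `B (ρ γ) B⁻¹` is unitary.
-/

abbrev PGL2 : Type := GL (Fin 2) ℂ ⧸ Subgroup.center (GL (Fin 2) ℂ)

open scoped MatrixGroups ComplexOrder

theorem Subgroup.finite_comap_of_finite_ker {G G' : Type*} [Group G] [Group G'] (f : G →* G')
    [Finite f.ker] (K : Subgroup G') [Finite K] : Finite (K.comap f) := by
  refine (f.subgroupComap K).finite_iff_finite_ker_range.mpr ⟨?_, inferInstance⟩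
  refine Finite.of_injective (fun x ↦ (⟨x.1.1, ?_⟩ : f.ker)) fun x y hxy ↦ ?_
  · exact congrArg Subtype.val x.2
  · exact Subtype.ext (Subtype.ext (congrArg Subtype.val hxy :))

namespace Matrix

section Unitary

variable {n R : Type*} [Fintype n] [DecidableEq n] [CommRing R] [StarRing R]

theorem mul_mul_inv_mem_unitaryGroup {A P : Matrix n n R} (B : GL n R)
    (hB : (B : Matrix n n R)ᴴ * B = P) (hA : Aᴴ * P * A = P) :
    (B : Matrix n n R) * A * ((B⁻¹ : GL n R) : Matrix n n R) ∈ unitaryGroup n R := by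
  set C : Matrix n n R := ((B⁻¹ : GL n R) : Matrix n n R)
  rw [mem_unitaryGroup_iff', star_eq_conjTranspose]
  calc (↑B * A * C)ᴴ * (↑B * A * C) = Cᴴ * (Aᴴ * ((↑B)ᴴ * ↑B) * A) * C := by
        simp only [conjTranspose_mul, Matrix.mul_assoc]
    _ = Cᴴ * ((↑B)ᴴ * ↑B) * C := by rw [hB, hA]
    _ = (↑B * C)ᴴ * (↑B * C) := by simp only [conjTranspose_mul, Matrix.mul_assoc]
    _ = 1 := by simp [C]

end Unitary

variable {n 𝕜 : Type*} [Fintype n] [DecidableEq n] [RCLike 𝕜]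

noncomputable def averagedGram {Γ : Type*} [Group Γ] [Fintype Γ] (ρ : Γ →* GL n 𝕜) :
    Matrix n n 𝕜 :=
  ∑ γ, (ρ γ : Matrix n n 𝕜)ᴴ * ρ γ

theorem posDef_averagedGram {Γ : Type*} [Group Γ] [Fintype Γ] (ρ : Γ →* GL n 𝕜) :
    (averagedGram ρ).PosDef :=
  posDef_sum Finset.univ_nonempty fun γ _ ↦
    .conjTranspose_mul_self _ (mulVec_injective_iff_isUnit.mpr (ρ γ).isUnit)

theorem conjTranspose_mul_averagedGram_mul {Γ : Type*} [Group Γ] [Fintype Γ] (ρ : Γ →* GL n 𝕜)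
    (γ : Γ) : (ρ γ : Matrix n n 𝕜)ᴴ * averagedGram ρ * ρ γ = averagedGram ρ := by
  rw [averagedGram, Finset.mul_sum, Finset.sum_mul]
  refine Fintype.sum_equiv (Equiv.mulRight γ) _ _ fun δ ↦ ?_
  simp only [Equiv.coe_mulRight, map_mul, Units.val_mul, conjTranspose_mul, Matrix.mul_assoc]

open scoped MatrixOrder in
theorem exists_conjTranspose_mul_self_eq {P : Matrix n n 𝕜} (hP : P.PosDef) :
    ∃ B : GL n 𝕜, (B : Matrix n n 𝕜)ᴴ * B = P := by
  obtain ⟨B, hB, rfl⟩ := CStarAlgebra.isStrictlyPositive_iff_eq_star_mul_self.mp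
    hP.isStrictlyPositive
  exact ⟨hB.unit, rfl⟩

theorem GeneralLinearGroup.exists_conj_mem_unitaryGroup {Γ : Type*} [Group Γ] [Finite Γ]
    (ρ : Γ →* GL n 𝕜) :
    ∃ B : GL n 𝕜, ∀ γ, ((B * ρ γ * B⁻¹ : GL n 𝕜) : Matrix n n 𝕜) ∈ unitaryGroup n 𝕜 := by
  have := Fintype.ofFinite Γ
  obtain ⟨B, hB⟩ := exists_conjTranspose_mul_self_eq (posDef_averagedGram ρ)
  exact ⟨B, fun γ ↦ by
    simpa using mul_mul_inv_mem_unitaryGroup B hB (conjTranspose_mul_averagedGram_mul ρ γ)⟩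

end Matrix

namespace Matrix.SpecialLinearGroup

variable {n : Type*} [Fintype n] [DecidableEq n]

instance finite_ker_toPGL {R : Type*} [CommRing R] [IsDomain R] :
    Finite (toPGL : SpecialLinearGroup n R →* PGL(n, R)).ker := by
  have : NeZero (max (Fintype.card n) 1) := ⟨(lt_max_of_lt_right one_pos).ne'⟩
  rw [toPGL_ker]
  exact .of_equiv _ center_equiv_rootsOfUnity.symm.toEquiv

theorem toPGL_surjective [Nonempty n] {F : Type*} [Field F] [IsAlgClosed F] :
    Function.Surjective (toPGL : SpecialLinearGroup n F →* PGL(n, F)) := by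
  refine (ProjectiveSpecialLinearGroup.toPGL_surj_of_roots fun r ↦ ?_).comp
    QuotientGroup.mk_surjective
  obtain ⟨k, hk⟩ := IsAlgClosed.exists_pow_nat_eq (r : F) (Fintype.card_pos (α := n))
  have hk0 : k ≠ 0 := ne_zero_pow Fintype.card_ne_zero (hk ▸ r.ne_zero)
  exact ⟨Units.mk0 k hk0, Units.ext hk⟩

end Matrix.SpecialLinearGroup

namespace Matrix.ProjGenLinGroup

variable {n : Type*} [Fintype n] [DecidableEq n]

theorem exists_conj_mem_unitaryGroup [Nonempty n] (G : Subgroup PGL(n, ℂ)) [Finite G] :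
    ∃ x : PGL(n, ℂ), ∀ g ∈ G, ∃ M : GL n ℂ,
      (M : Matrix n n ℂ) ∈ unitaryGroup n ℂ ∧ x * g * x⁻¹ = mk M := by
  have := Subgroup.finite_comap_of_finite_ker SpecialLinearGroup.toPGL G
  obtain ⟨B, hB⟩ := GeneralLinearGroup.exists_conj_mem_unitaryGroup
    (SpecialLinearGroup.toGL.comp (G.comap SpecialLinearGroup.toPGL).subtype)
  refine ⟨mk B, fun g hg ↦ ?_⟩
  obtain ⟨s, rfl⟩ := SpecialLinearGroup.toPGL_surjective g
  exact ⟨B * SpecialLinearGroup.toGL s * B⁻¹, hB ⟨s, hg⟩, by simp⟩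

end Matrix.ProjGenLinGroup

/-- Every finite subgroup of `PGL(2,ℂ)` is conjugate, within `PGL(2,ℂ)`, to a subgroup of the
image of the unitary group `U(2)` under the canonical projection `GL(2,ℂ) → PGL(2,ℂ)`. -/
theorem stmt11 (G : Subgroup PGL2) (hG : Finite G) :
    ∃ x : PGL2, ∀ g ∈ G, ∃ M : GL (Fin 2) ℂ,
      (M : Matrix (Fin 2) (Fin 2) ℂ) ∈ Matrix.unitaryGroup (Fin 2) ℂ ∧
      x * g * x⁻¹ = QuotientGroup.mk M :=
  @Matrix.ProjGenLinGroup.exists_conj_mem_unitaryGroup (Fin 2) _ _ _ G hG
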